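/- Let A, B, C be bounded operators as in the block-matrix setup and suppose X ∈ B(H_A, H_C) satisfies the Riccati equation X A - C X + X B X = B*. Then the operator Λ = (I + X*X)^{1/2} (A + B X) (I + X*X)^{-1/2} is self-adjoint on H_A. -/
import Mathlib

open ContinuousLinearMap

set_option maxHeartbeats 1000000

/-- If `X` solves the Riccati equation, then `Λ = (I + X*X)^{1/2} (A + B X) (I + X*X)^{-1/2}`
is self-adjoint.  Here `S` is the positive square root of `I + X*X` and `Sinv` its inverse. -/
theorem riccati_similar_selfAdjoint
    {HA HC : Type*} [NormedAddCommGroup HA] [InnerProductSpace ℂ HA] [CompleteSpace HA]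
    [NormedAddCommGroup HC] [InnerProductSpace ℂ HC] [CompleteSpace HC]
    (A : HA →L[ℂ] HA) (hA : IsSelfAdjoint A)
    (C : HC →L[ℂ] HC) (hC : IsSelfAdjoint C)
    (B : HC →L[ℂ] HA)
    (X : HA →L[ℂ] HC)
    (hX : X ∘L A - C ∘L X + X ∘L B ∘L X = ContinuousLinearMap.adjoint B)
    (S : HA →L[ℂ] HA) (hSpos : S.IsPositive)
    (hSsq : S ∘L S = 1 + ContinuousLinearMap.adjoint X ∘L X)
    (Sinv : HA →L[ℂ] HA) (hSinv : S ∘L Sinv = 1) (hSinv' : Sinv ∘L S = 1) :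
    IsSelfAdjoint (S ∘L (A + B ∘L X) ∘L Sinv) := by
  have hA' : adjoint A = A := isSelfAdjoint_iff'.mp hA
  have hC' : adjoint C = C := isSelfAdjoint_iff'.mp hC
  have hS : adjoint S = S := isSelfAdjoint_iff'.mp hSpos.isSelfAdjoint
  have hSinvSA : adjoint Sinv = Sinv := by
    have h1 : adjoint Sinv ∘L S = 1 := by
      have := congrArg adjoint hSinv
      rw [adjoint_comp, hS] at this
      rw [this, ← ContinuousLinearMap.star_eq_adjoint]
      exact star_one _
    calc adjoint Sinv = adjoint Sinv ∘L (S ∘L Sinv) := by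
          rw [hSinv, ContinuousLinearMap.one_def, ContinuousLinearMap.comp_id]
      _ = (adjoint Sinv ∘L S) ∘L Sinv := by rw [ContinuousLinearMap.comp_assoc]
      _ = Sinv := by rw [h1, ContinuousLinearMap.one_def, ContinuousLinearMap.id_comp]
  -- adjoint of the Riccati equation
  have hX' : A ∘L adjoint X - adjoint X ∘L C + adjoint X ∘L adjoint B ∘L adjoint X = B := by
    have h := congrArg adjoint hX
    rw [map_add, map_sub, adjoint_comp, adjoint_comp, adjoint_comp, adjoint_comp,
      adjoint_adjoint, hA', hC'] at h
    simpa only [ContinuousLinearMap.comp_assoc] using h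
  have i1 : adjoint X ∘L (X ∘L A) - adjoint X ∘L (C ∘L X) + adjoint X ∘L (X ∘L (B ∘L X))
      = adjoint X ∘L adjoint B := by
    have h := congrArg (fun T : HA →L[ℂ] HC => adjoint X ∘L T) hX
    simpa only [ContinuousLinearMap.comp_add, ContinuousLinearMap.comp_sub,
      ContinuousLinearMap.comp_assoc] using h
  have i2 : A ∘L (adjoint X ∘L X) - adjoint X ∘L (C ∘L X)
      + adjoint X ∘L (adjoint B ∘L (adjoint X ∘L X)) = B ∘L X := by
    have h := congrArg (fun T : HC →L[ℂ] HA => T ∘L X) hX'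
    simpa only [ContinuousLinearMap.add_comp, ContinuousLinearMap.sub_comp,
      ContinuousLinearMap.comp_assoc] using h
  -- key intertwining identity
  have key : (S ∘L S) ∘L (A + B ∘L X) = (A + adjoint X ∘L adjoint B) ∘L (S ∘L S) := by
    rw [hSsq]
    have hzero : (1 + adjoint X ∘L X) ∘L (A + B ∘L X)
        - (A + adjoint X ∘L adjoint B) ∘L (1 + adjoint X ∘L X)
        = (adjoint X ∘L (X ∘L A) - adjoint X ∘L (C ∘L X) + adjoint X ∘L (X ∘L (B ∘L X))
            - adjoint X ∘L adjoint B)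
          + (B ∘L X - (A ∘L (adjoint X ∘L X) - adjoint X ∘L (C ∘L X)
            + adjoint X ∘L (adjoint B ∘L (adjoint X ∘L X)))) := by
      simp only [ContinuousLinearMap.add_comp, ContinuousLinearMap.comp_add,
        ContinuousLinearMap.one_def, ContinuousLinearMap.id_comp,
        ContinuousLinearMap.comp_id, ContinuousLinearMap.comp_assoc]
      abel
    have h0 : (1 + adjoint X ∘L X) ∘L (A + B ∘L X)
        - (A + adjoint X ∘L adjoint B) ∘L (1 + adjoint X ∘L X) = 0 := by
      rw [hzero, i1, i2]; abel
    exact sub_eq_zero.mp h0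
  -- conclude
  rw [isSelfAdjoint_iff']
  rw [adjoint_comp, adjoint_comp, hS, hSinvSA, map_add, adjoint_comp, hA']
  -- goal : Sinv ∘L ((A + X† ∘L B†) ∘L S) = S ∘L ((A + B∘X) ∘L Sinv)
  have e : (A + adjoint X ∘L adjoint B) ∘L S = S ∘L (S ∘L ((A + B ∘L X) ∘L Sinv)) := by
    calc (A + adjoint X ∘L adjoint B) ∘L S
        = ((A + adjoint X ∘L adjoint B) ∘L (S ∘L S)) ∘L Sinv := by
          rw [ContinuousLinearMap.comp_assoc, ContinuousLinearMap.comp_assoc, hSinv,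
            ContinuousLinearMap.one_def, ContinuousLinearMap.comp_id]
      _ = ((S ∘L S) ∘L (A + B ∘L X)) ∘L Sinv := by rw [← key]
      _ = S ∘L (S ∘L ((A + B ∘L X) ∘L Sinv)) := by
          simp only [ContinuousLinearMap.comp_assoc]
  rw [ContinuousLinearMap.comp_assoc, e, ← ContinuousLinearMap.comp_assoc, hSinv',
    ContinuousLinearMap.one_def, ContinuousLinearMap.id_comp]
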